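/- Let Ω be a nonempty finite type and let E = ⟨𝓔, mod⟩ be an epistemic space over Ω. Then AGM revision is realizable in E if and only if there exists a maxichoice revision operator for E. -/

import Mathlib

open Set

/-- `minSet r S` is the set of `r`-minimal elements of `S`:
`min(S, r) = {ω ∈ S : r ω ω' for all ω' ∈ S}`. -/
def minSet {Ω : Type*} (r : Ω → Ω → Prop) (S : Set Ω) : Set Ω :=
  {ω ∈ S | ∀ ω' ∈ S, r ω ω'}

/-- A linear order as a relation: total, antisymmetric and transitive. -/
def IsLinRel {Ω : Type*} (r : Ω → Ω → Prop) : Prop :=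
  (∀ a b, r a b ∨ r b a) ∧ (∀ a b, r a b → r b a → a = b) ∧
    (∀ a b c, r a b → r b c → r a c)

/-- AGM contraction operator for the epistemic space `⟨E, md⟩` (postulates C1–C7,
formulated on model sets). -/
def IsContraction {Ω E : Type*} (md : E → Set Ω) (c : E → Set Ω → E) : Prop :=
  ∀ (Ψ : E) (A B : Set Ω),
    md Ψ ⊆ md (c Ψ A) ∧
    (¬ md Ψ ⊆ A → md (c Ψ A) ⊆ md Ψ) ∧
    (A ≠ Set.univ → ¬ md (c Ψ A) ⊆ A) ∧
    md (c Ψ A) ∩ A ⊆ md Ψ ∧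
    md (c Ψ (A ∩ B)) ⊆ md (c Ψ A) ∪ md (c Ψ B) ∧
    (¬ md (c Ψ (A ∩ B)) ⊆ B → md (c Ψ B) ⊆ md (c Ψ (A ∩ B)))

/-- AGM revision operator for the epistemic space `⟨E, md⟩` (postulates R1–R6,
formulated on model sets). -/
def IsRevision {Ω E : Type*} (md : E → Set Ω) (s : E → Set Ω → E) : Prop :=
  ∀ (Ψ : E) (A B : Set Ω),
    md (s Ψ A) ⊆ A ∧
    (md Ψ ∩ A ≠ ∅ → md (s Ψ A) = md Ψ ∩ A) ∧
    (A ≠ ∅ → md (s Ψ A) ≠ ∅) ∧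
    md (s Ψ A) ∩ B ⊆ md (s Ψ (A ∩ B)) ∧
    (md (s Ψ A) ∩ B ≠ ∅ → md (s Ψ (A ∩ B)) ⊆ md (s Ψ A) ∩ B)

/-- Postulate (ZC). -/
def ZC {Ω E : Type*} (md : E → Set Ω) : Prop :=
  ∀ (Ψ : E) (M : Set Ω), md Ψ ⊆ M → ∃ Ψ' : E, md Ψ' = M

/-- Postulate (ZR1). -/
def ZR1 {Ω E : Type*} (md : E → Set Ω) : Prop :=
  ∀ ω : Ω, ∃ Ψ : E, md Ψ = {ω}

/-- Postulate (ZR2). -/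
def ZR2 {Ω E : Type*} (md : E → Set Ω) : Prop :=
  ∀ (Ψ : E) (M : Set Ω), M ⊆ md Ψ → ∃ Ψ' : E, md Ψ' = M

/-- Postulate (Unbiased). -/
def Unbiased {Ω E : Type*} (md : E → Set Ω) : Prop :=
  ∀ M : Set Ω, ∃ Ψ : E, md Ψ = M

/-- Maxichoice contraction operator. -/
def IsMaxichoiceContraction {Ω E : Type*} (md : E → Set Ω) (c : E → Set Ω → E) : Prop :=
  IsContraction md c ∧
    ∀ Ψ : E, ∃ r : Ω → Ω → Prop, IsLinRel r ∧ ∀ A : Set Ω,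
      (¬ md Ψ ⊆ A → md (c Ψ A) = md Ψ) ∧
      (md Ψ ⊆ A → md (c Ψ A) = md Ψ ∪ minSet r Aᶜ)

/-- Linear contraction operator: a maxichoice contraction operator based on one
single linear order for all epistemic states. -/
def IsLinearContraction {Ω E : Type*} (md : E → Set Ω) (c : E → Set Ω → E) : Prop :=
  IsContraction md c ∧
    ∃ r : Ω → Ω → Prop, IsLinRel r ∧ ∀ (Ψ : E) (A : Set Ω),
      (¬ md Ψ ⊆ A → md (c Ψ A) = md Ψ) ∧
      (md Ψ ⊆ A → md (c Ψ A) = md Ψ ∪ minSet r Aᶜ)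

/-- Full meet contraction operator. -/
def IsFullMeetContraction {Ω E : Type*} (md : E → Set Ω) (c : E → Set Ω → E) : Prop :=
  IsContraction md c ∧
    ∀ (Ψ : E) (A : Set Ω),
      (¬ md Ψ ⊆ A → md (c Ψ A) = md Ψ) ∧
      (md Ψ ⊆ A → md (c Ψ A) = md Ψ ∪ Aᶜ)

/-- Maxichoice revision operator. -/
def IsMaxichoiceRevision {Ω E : Type*} (md : E → Set Ω) (s : E → Set Ω → E) : Prop :=
  IsRevision md s ∧
    ∀ Ψ : E, ∃ r : Ω → Ω → Prop, IsLinRel r ∧ ∀ A : Set Ω,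
      (md Ψ ∩ A ≠ ∅ → md (s Ψ A) = md Ψ ∩ A) ∧
      (md Ψ ∩ A = ∅ → md (s Ψ A) = minSet r A)

/-- Linear revision operator: a maxichoice revision operator based on one single
linear order for all epistemic states. -/
def IsLinearRevision {Ω E : Type*} (md : E → Set Ω) (s : E → Set Ω → E) : Prop :=
  IsRevision md s ∧
    ∃ r : Ω → Ω → Prop, IsLinRel r ∧ ∀ (Ψ : E) (A : Set Ω),
      (md Ψ ∩ A ≠ ∅ → md (s Ψ A) = md Ψ ∩ A) ∧
      (md Ψ ∩ A = ∅ → md (s Ψ A) = minSet r A)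

/-- Full meet revision operator. -/
def IsFullMeetRevision {Ω E : Type*} (md : E → Set Ω) (s : E → Set Ω → E) : Prop :=
  IsRevision md s ∧
    ∀ (Ψ : E) (A : Set Ω),
      (md Ψ ∩ A ≠ ∅ → md (s Ψ A) = md Ψ ∩ A) ∧
      (md Ψ ∩ A = ∅ → md (s Ψ A) = A)

/-!
Fix once and for all a well-order `≤` of `Ω`. Given any AGM revision operator `★`, the maxichoice
operator `Ψ ∘ A := mod(Ψ) ∩ A` if this is consistent and `min(A, ≤)` otherwise only produces
model sets that `★` already realizes: `mod(Ψ) ∩ A = mod(Ψ ★ A)` by (R2), and `min(A, ≤)` is a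
singleton `{a}` or empty, which (R1) and (R3) force to equal `mod(Ψ ★ min(A, ≤))`.
-/

section minSet

variable {α : Type*} {r : α → α → Prop} {A B : Set α}

theorem minSet_subset : minSet r A ⊆ A := fun _ h => h.1

theorem minSet_inter_subset : minSet r A ∩ B ⊆ minSet r (A ∩ B) :=
  fun _ ⟨⟨hA, hmin⟩, hB⟩ => ⟨⟨hA, hB⟩, fun y hy => hmin y hy.1⟩

theorem minSet_subsingleton (hr : IsLinRel r) : (minSet r A).Subsingleton :=
  fun x ⟨hx, hxmin⟩ y ⟨hy, hymin⟩ => hr.2.1 x y (hxmin y hy) (hymin x hx)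

theorem minSet_inter_subset_of_nonempty (hr : IsLinRel r) (h : (minSet r A ∩ B).Nonempty) :
    minSet r (A ∩ B) ⊆ minSet r A ∩ B := by
  obtain ⟨x, hxA, hxB⟩ := h
  intro y hy
  have hyx : y = x := hr.2.1 y x (hy.2 x ⟨hxA.1, hxB⟩) (hxA.2 y hy.1.1)
  exact hyx ▸ ⟨hxA, hxB⟩

theorem isLinRel_le [LinearOrder α] : IsLinRel fun a b : α => a ≤ b :=
  ⟨le_total, fun _ _ => le_antisymm, fun _ _ _ => le_trans⟩

theorem minSet_le_nonempty [LinearOrder α] [WellFoundedLT α] (hA : A.Nonempty) :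
    (minSet (· ≤ ·) A).Nonempty :=
  ⟨wellFounded_lt.min A hA, wellFounded_lt.min_mem A hA,
    fun _ hy => not_lt.mp (wellFounded_lt.not_lt_min A hy)⟩

theorem exists_isLinRel_minSet_nonempty (α : Type*) :
    ∃ r : α → α → Prop, IsLinRel r ∧ ∀ A : Set α, A.Nonempty → (minSet r A).Nonempty := by
  obtain ⟨_, _⟩ := exists_wellFoundedLT α
  exact ⟨fun a b => a ≤ b, isLinRel_le, fun _ => minSet_le_nonempty⟩

end minSet

section maxichoice

variable {Ω E : Type*} (md : E → Set Ω) (r : Ω → Ω → Prop)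

def maxichoiceModels (Ψ : E) (A : Set Ω) : Set Ω :=
  if md Ψ ∩ A = ∅ then minSet r A else md Ψ ∩ A

variable {md r} {Ψ : E} {A B : Set Ω}

theorem maxichoiceModels_of_eq_empty (h : md Ψ ∩ A = ∅) :
    maxichoiceModels md r Ψ A = minSet r A :=
  if_pos h

theorem maxichoiceModels_of_ne_empty (h : md Ψ ∩ A ≠ ∅) :
    maxichoiceModels md r Ψ A = md Ψ ∩ A :=
  if_neg h

theorem maxichoiceModels_subset : maxichoiceModels md r Ψ A ⊆ A := by
  unfold maxichoiceModels
  split_ifs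
  exacts [minSet_subset, inter_subset_right]

theorem maxichoiceModels_ne_empty (hmin : ∀ A : Set Ω, A.Nonempty → (minSet r A).Nonempty)
    (hA : A ≠ ∅) : maxichoiceModels md r Ψ A ≠ ∅ := by
  unfold maxichoiceModels
  split_ifs with h
  exacts [(hmin A (nonempty_iff_ne_empty.mpr hA)).ne_empty, h]

theorem maxichoiceModels_inter_subset :
    maxichoiceModels md r Ψ A ∩ B ⊆ maxichoiceModels md r Ψ (A ∩ B) := by
  by_cases hA : md Ψ ∩ A = ∅
  · have hAB : md Ψ ∩ (A ∩ B) = ∅ := by rw [← inter_assoc, hA, empty_inter]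
    rw [maxichoiceModels_of_eq_empty hA, maxichoiceModels_of_eq_empty hAB]
    exact minSet_inter_subset
  · rw [maxichoiceModels_of_ne_empty hA, inter_assoc]
    by_cases hAB : md Ψ ∩ (A ∩ B) = ∅
    · simp only [hAB, empty_subset]
    · rw [maxichoiceModels_of_ne_empty hAB]

theorem maxichoiceModels_inter_subset_of_ne_empty (hr : IsLinRel r)
    (h : maxichoiceModels md r Ψ A ∩ B ≠ ∅) :
    maxichoiceModels md r Ψ (A ∩ B) ⊆ maxichoiceModels md r Ψ A ∩ B := by
  by_cases hA : md Ψ ∩ A = ∅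
  · have hAB : md Ψ ∩ (A ∩ B) = ∅ := by rw [← inter_assoc, hA, empty_inter]
    rw [maxichoiceModels_of_eq_empty hA] at h ⊢
    rw [maxichoiceModels_of_eq_empty hAB]
    exact minSet_inter_subset_of_nonempty hr (nonempty_iff_ne_empty.mpr h)
  · rw [maxichoiceModels_of_ne_empty hA, inter_assoc] at h ⊢
    rw [maxichoiceModels_of_ne_empty h]

theorem isMaxichoiceRevision_of_md_eq (hr : IsLinRel r)
    (hmin : ∀ A : Set Ω, A.Nonempty → (minSet r A).Nonempty) {s : E → Set Ω → E}
    (hs : ∀ Ψ A, md (s Ψ A) = maxichoiceModels md r Ψ A) : IsMaxichoiceRevision md s := by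
  refine ⟨fun Ψ A B => ?_, fun Ψ => ⟨r, hr, fun A => ?_⟩⟩
  · simp only [hs]
    exact ⟨maxichoiceModels_subset, maxichoiceModels_of_ne_empty, maxichoiceModels_ne_empty hmin,
      maxichoiceModels_inter_subset, maxichoiceModels_inter_subset_of_ne_empty hr⟩
  · simp only [hs]
    exact ⟨maxichoiceModels_of_ne_empty, maxichoiceModels_of_eq_empty⟩

theorem IsRevision.exists_md_eq_of_subsingleton {s : E → Set Ω → E} (hs : IsRevision md s)
    (Ψ : E) {S : Set Ω} (hS : S.Subsingleton) : ∃ Φ, md Φ = S := by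
  refine ⟨s Ψ S, ?_⟩
  obtain rfl | ⟨a, rfl⟩ := hS.eq_empty_or_singleton
  · exact subset_empty_iff.mp (hs Ψ ∅ ∅).1
  · exact (subset_singleton_iff_eq.mp (hs Ψ {a} {a}).1).resolve_left
      ((hs Ψ {a} {a}).2.2.1 (singleton_ne_empty a))

theorem IsRevision.exists_md_eq_maxichoiceModels {s : E → Set Ω → E} (hs : IsRevision md s)
    (hr : IsLinRel r) (Ψ : E) (A : Set Ω) : ∃ Φ, md Φ = maxichoiceModels md r Ψ A := by
  unfold maxichoiceModels
  split_ifs with h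
  · exact hs.exists_md_eq_of_subsingleton Ψ (minSet_subsingleton hr)
  · exact ⟨s Ψ A, (hs Ψ A A).2.1 h⟩

end maxichoice

theorem revision_realizable_iff_maxichoiceRevision_general {Ω E : Type*}
    (md : E → Set Ω) :
    (∃ s : E → Set Ω → E, IsRevision md s) ↔
      (∃ s : E → Set Ω → E, IsMaxichoiceRevision md s) := by
  refine ⟨fun ⟨s, hs⟩ => ?_, fun ⟨s, hs, _⟩ => ⟨s, hs⟩⟩
  obtain ⟨r, hr, hmin⟩ := exists_isLinRel_minSet_nonempty Ω
  choose s' hs' using hs.exists_md_eq_maxichoiceModels hr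
  exact ⟨s', isMaxichoiceRevision_of_md_eq hr hmin hs'⟩

/-- AGM revision is realizable in `⟨E, md⟩` iff there exists a
maxichoice revision operator for `⟨E, md⟩`. -/
theorem revision_realizable_iff_maxichoiceRevision {Ω E : Type*} [Fintype Ω] [Nonempty Ω] [Nonempty E]
    (md : E → Set Ω) :
    (∃ s : E → Set Ω → E, IsRevision md s) ↔
      (∃ s : E → Set Ω → E, IsMaxichoiceRevision md s) :=
  revision_realizable_iff_maxichoiceRevision_general md
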